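/- arXiv:2309.14284 — 5 statements merged into one kernel-verified Lean document; each statement's English description precedes it below -/
import Mathlib

section
/- Suppose U is concave and continuous on the space of a-variables. Then the value function Φ_U is concave on the nonnegative orthant of capacity matrices: for all C, C' with C(i,j) ≥ 0 and C'(i,j) ≥ 0 for all i,j, and all θ ∈ [0,1], one has Φ_U(θ·C + (1−θ)·C') ≥ θ·Φ_U(C) + (1−θ)·Φ_U(C'). -/
/-!
Mix near-optimal solutions: the convex combination of a feasible pair for `C` and one for `C'` is
feasible for the combined capacity, and concavity of `U` compares the utilities. The only
subtlety is that the supremum may be infinite, in which case `sSup` returns `0`. Whether it is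
infinite does not depend on the (nonnegative) capacity: the zero flow supports every demand
vanishing on the sources, every feasible demand lies in a box that is bounded on the sources
only, and a concave continuous `U` bounded above on the former set is bounded above on the box.
-/

open Finset

noncomputable section

/-- Net outflow of commodity `k` at node `i` for flow `r`. -/
def mcfOut {N : ℕ} (A : Finset (Fin N)) (r : Fin N → Fin N → A → ℝ) (k : A) (i : Fin N) : ℝ :=
  (∑ j, r i j k) - (∑ j, r j i k)

/-- Feasible set of the multi-commodity flow problem with capacity matrix `C`. -/
def mcfFeas {N : ℕ} (A : Finset (Fin N)) (S : A → Finset A) (C : Fin N → Fin N → ℝ) :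
    Set ((Fin N → Fin N → A → ℝ) × (A → A → ℝ)) :=
  { p | (∀ i j k, 0 ≤ p.1 i j k ∧ p.1 i j k ≤ 1) ∧
        (∀ i k, 0 ≤ p.2 i k) ∧
        (∀ (k : A) (i : A), i ∈ S k → p.2 i k ≤ mcfOut A p.1 k i) ∧
        (∀ (k : A) (i : Fin N), i ∉ A → mcfOut A p.1 k i = 0) ∧
        (∀ i j, ∑ k, p.1 i j k ≤ C i j) }

/-- Value function `Φ_U(C)` of the multi-commodity flow problem. -/
def mcfValue {N : ℕ} (A : Finset (Fin N)) (S : A → Finset A)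
    (U : (A → A → ℝ) → ℝ) (C : Fin N → Fin N → ℝ) : ℝ :=
  sSup ((fun p => U p.2) '' mcfFeas A S C)

theorem Real.convexComb_sSup_le {s t u : Set ℝ} {θ : ℝ} (hθ0 : 0 ≤ θ) (hθ1 : θ ≤ 1)
    (hs : s.Nonempty) (hs' : BddAbove s) (ht : t.Nonempty) (ht' : BddAbove t)
    (hu : BddAbove u) (h : ∀ x ∈ s, ∀ y ∈ t, ∃ z ∈ u, θ * x + (1 - θ) * y ≤ z) :
    θ * sSup s + (1 - θ) * sSup t ≤ sSup u := by
  have hθ1' : 0 ≤ 1 - θ := sub_nonneg.2 hθ1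
  rw [← smul_eq_mul, ← smul_eq_mul, ← Real.sSup_smul_of_nonneg hθ0,
    ← Real.sSup_smul_of_nonneg hθ1', ← csSup_add (hs.smul_set) (hs'.smul_of_nonneg hθ0)
    (ht.smul_set) (ht'.smul_of_nonneg hθ1')]
  refine csSup_le (hs.smul_set.add ht.smul_set) ?_
  rintro _ ⟨_, ⟨x, hx, rfl⟩, _, ⟨y, hy, rfl⟩, rfl⟩
  obtain ⟨z, hz, hxyz⟩ := h x hx y hy
  exact le_csSup_of_le hu hz hxyz

theorem ConcaveOn.bddAbove_image_of_midpoint_mem {E : Type*} [AddCommGroup E] [Module ℝ E]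
    {U : E → ℝ} (hU : ConcaveOn ℝ Set.univ U) {B W Z : Set E}
    (hW : BddBelow (U '' W)) (hZ : BddAbove (U '' Z))
    (h : ∀ a ∈ B, ∃ w ∈ W, (1 / 2 : ℝ) • a + (1 / 2 : ℝ) • w ∈ Z) :
    BddAbove (U '' B) := by
  obtain ⟨m, hm⟩ := hW
  obtain ⟨M, hM⟩ := hZ
  refine ⟨2 * M - m, ?_⟩
  rintro _ ⟨a, ha, rfl⟩
  obtain ⟨w, hw, hz⟩ := h a ha
  have hmid := hU.2 (Set.mem_univ a) (Set.mem_univ w) (by norm_num : (0 : ℝ) ≤ 1 / 2)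
    (by norm_num : (0 : ℝ) ≤ 1 / 2) (by norm_num)
  have := hm ⟨w, hw, rfl⟩
  have := hM ⟨_, hz, rfl⟩
  simp only [smul_eq_mul] at hmid
  linarith

section

variable {N : ℕ} {A : Finset (Fin N)} {S : A → Finset A}

variable (A S) in
def mcfUtilities (U : (A → A → ℝ) → ℝ) (C : Fin N → Fin N → ℝ) : Set ℝ :=
  (fun p => U p.2) '' mcfFeas A S C

variable (A S) in
def mcfDemandBox : Set (A → A → ℝ) :=
  {a | ∀ i k, 0 ≤ a i k ∧ (i ∈ S k → a i k ≤ N)}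

variable (A S) in
def mcfIdleDemands : Set (A → A → ℝ) :=
  {a | ∀ i k, 0 ≤ a i k ∧ (i ∈ S k → a i k = 0)}

theorem mcfOut_le_card {r : Fin N → Fin N → A → ℝ} (hr : ∀ i j k, 0 ≤ r i j k ∧ r i j k ≤ 1)
    (k : A) (i : Fin N) : mcfOut A r k i ≤ N := by
  have hout : ∑ j, r i j k ≤ ∑ _j : Fin N, (1 : ℝ) := sum_le_sum fun j _ => (hr i j k).2
  have hin : 0 ≤ ∑ j, r j i k := sum_nonneg fun j _ => (hr j i k).1
  simp only [sum_const, card_univ, Fintype.card_fin, nsmul_eq_mul, mul_one] at hout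
  simp only [mcfOut]
  linarith

theorem mcfOut_convexComb (r r' : Fin N → Fin N → A → ℝ) (θ : ℝ) (k : A) (i : Fin N) :
    mcfOut A (θ • r + (1 - θ) • r') k i = θ * mcfOut A r k i + (1 - θ) * mcfOut A r' k i := by
  simp only [mcfOut, Pi.add_apply, Pi.smul_apply, smul_eq_mul, sum_add_distrib, ← mul_sum]
  ring

theorem snd_mem_mcfDemandBox {C : Fin N → Fin N → ℝ} {p : (Fin N → Fin N → A → ℝ) × (A → A → ℝ)}
    (hp : p ∈ mcfFeas A S C) : p.2 ∈ mcfDemandBox A S :=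
  fun i k => ⟨hp.2.1 i k, fun hi => (hp.2.2.1 k i hi).trans (mcfOut_le_card hp.1 k i)⟩

theorem zero_mem_mcfFeas {C : Fin N → Fin N → ℝ} (hC : ∀ i j, 0 ≤ C i j) {a : A → A → ℝ}
    (ha : a ∈ mcfIdleDemands A S) : (0, a) ∈ mcfFeas A S C := by
  have hout : ∀ k i, mcfOut A 0 k i = 0 := fun k i => by simp [mcfOut]
  refine ⟨fun i j k => by simp, fun i k => (ha i k).1, fun k i hi => ?_, fun k i _ => hout k i,
    fun i j => by simpa using hC i j⟩
  rw [hout]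
  exact ((ha i k).2 hi).le

theorem bddAbove_image_mcfDemandBox {U : (A → A → ℝ) → ℝ} (hUconc : ConcaveOn ℝ Set.univ U)
    (hUcont : Continuous U) (hU : BddAbove (U '' mcfIdleDemands A S)) :
    BddAbove (U '' mcfDemandBox A S) := by
  let W : Set (A → A → ℝ) := Set.univ.pi fun _ => Set.univ.pi fun _ => Set.Icc (-(N : ℝ)) 0
  have hW : IsCompact W := isCompact_univ_pi fun _ => isCompact_univ_pi fun _ => isCompact_Icc
  refine hUconc.bddAbove_image_of_midpoint_mem (hW.image hUcont).bddBelow hU fun a ha => ?_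
  -- reflect `a` to `-a` on the sources, so that the midpoint vanishes there
  refine ⟨fun i k => if i ∈ S k then -a i k else 0, fun i _ k _ => ?_, fun i k => ?_⟩
  · dsimp only
    split_ifs with hi
    · exact ⟨neg_le_neg ((ha i k).2 hi), neg_nonpos.2 (ha i k).1⟩
    · exact ⟨neg_nonpos.2 (Nat.cast_nonneg N), le_rfl⟩
  · simp only [Pi.add_apply, Pi.smul_apply, smul_eq_mul]
    split_ifs with hi
    · exact ⟨by linarith, fun _ => by ring⟩
    · exact ⟨by linarith [(ha i k).1], fun h => absurd h hi⟩

theorem bddAbove_mcfUtilities_iff {U : (A → A → ℝ) → ℝ} (hUconc : ConcaveOn ℝ Set.univ U)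
    (hUcont : Continuous U) {C : Fin N → Fin N → ℝ} (hC : ∀ i j, 0 ≤ C i j) :
    BddAbove (mcfUtilities A S U C) ↔ BddAbove (U '' mcfIdleDemands A S) := by
  constructor
  · refine fun h => h.mono ?_
    rintro _ ⟨a, ha, rfl⟩
    exact ⟨(0, a), zero_mem_mcfFeas hC ha, rfl⟩
  · refine fun h => (bddAbove_image_mcfDemandBox hUconc hUcont h).mono ?_
    rintro _ ⟨p, hp, rfl⟩
    exact ⟨p.2, snd_mem_mcfDemandBox hp, rfl⟩

theorem mcfUtilities_nonempty {U : (A → A → ℝ) → ℝ} {C : Fin N → Fin N → ℝ}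
    (hC : ∀ i j, 0 ≤ C i j) : (mcfUtilities A S U C).Nonempty :=
  ⟨_, (0, 0), zero_mem_mcfFeas hC fun _ _ => ⟨le_rfl, fun _ => rfl⟩, rfl⟩

theorem convexComb_mem_mcfFeas {C C' : Fin N → Fin N → ℝ} {θ : ℝ} (hθ0 : 0 ≤ θ) (hθ1 : θ ≤ 1)
    {p q : (Fin N → Fin N → A → ℝ) × (A → A → ℝ)}
    (hp : p ∈ mcfFeas A S C) (hq : q ∈ mcfFeas A S C') :
    θ • p + (1 - θ) • q ∈ mcfFeas A S (θ • C + (1 - θ) • C') := by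
  obtain ⟨hp₁, hp₂, hp₃, hp₄, hp₅⟩ := hp
  obtain ⟨hq₁, hq₂, hq₃, hq₄, hq₅⟩ := hq
  have hθ1' : 0 ≤ 1 - θ := sub_nonneg.2 hθ1
  simp only [mcfFeas, Set.mem_ofPred_eq, Prod.fst_add, Prod.snd_add, Prod.smul_fst,
    Prod.smul_snd, mcfOut_convexComb, Pi.add_apply, Pi.smul_apply, smul_eq_mul]
  refine ⟨fun i j k => ⟨?_, ?_⟩, fun i k => ?_, fun k i hi => ?_, fun k i hi => ?_, fun i j => ?_⟩
  · nlinarith [hp₁ i j k, hq₁ i j k]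
  · nlinarith [hp₁ i j k, hq₁ i j k]
  · nlinarith [hp₂ i k, hq₂ i k]
  · nlinarith [hp₃ k i hi, hq₃ k i hi]
  · simp [hp₄ k i hi, hq₄ k i hi]
  · rw [sum_add_distrib, ← mul_sum, ← mul_sum]
    nlinarith [hp₅ i j, hq₅ i j]

end

theorem mcfValue_concave_general {N : ℕ} (A : Finset (Fin N))
    (S : A → Finset A)
    (U : (A → A → ℝ) → ℝ) (hUconc : ConcaveOn ℝ Set.univ U) (hUcont : Continuous U)
    (C C' : Fin N → Fin N → ℝ) (hC : ∀ i j, 0 ≤ C i j) (hC' : ∀ i j, 0 ≤ C' i j)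
    (θ : ℝ) (hθ0 : 0 ≤ θ) (hθ1 : θ ≤ 1) :
    θ * mcfValue A S U C + (1 - θ) * mcfValue A S U C' ≤
      mcfValue A S U (fun i j => θ * C i j + (1 - θ) * C' i j) := by
  have hCθ : ∀ i j, 0 ≤ θ * C i j + (1 - θ) * C' i j := fun i j =>
    add_nonneg (mul_nonneg hθ0 (hC i j)) (mul_nonneg (sub_nonneg.2 hθ1) (hC' i j))
  have hbdd (D : Fin N → Fin N → ℝ) (hD : ∀ i j, 0 ≤ D i j) :=
    bddAbove_mcfUtilities_iff (S := S) hUconc hUcont hD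
  by_cases hU : BddAbove (U '' mcfIdleDemands A S)
  · refine Real.convexComb_sSup_le hθ0 hθ1 (mcfUtilities_nonempty hC) ((hbdd _ hC).2 hU)
      (mcfUtilities_nonempty hC') ((hbdd _ hC').2 hU) ((hbdd _ hCθ).2 hU) ?_
    rintro _ ⟨p, hp, rfl⟩ _ ⟨q, hq, rfl⟩
    refine ⟨_, ⟨_, convexComb_mem_mcfFeas hθ0 hθ1 hp hq, rfl⟩, ?_⟩
    simpa using hUconc.2 (Set.mem_univ p.2) (Set.mem_univ q.2) hθ0 (sub_nonneg.2 hθ1) (by ring)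
  · have hzero (D : Fin N → Fin N → ℝ) (hD : ∀ i j, 0 ≤ D i j) : mcfValue A S U D = 0 :=
      Real.sSup_of_not_bddAbove (mt (hbdd D hD).1 hU)
    simp [hzero C hC, hzero C' hC', hzero _ hCθ]

/-- If `U` is concave and continuous, then the value function `Φ_U` is concave on
the nonnegative orthant of capacity matrices. -/
theorem mcfValue_concave {N K : ℕ} (hN : 0 < N) (hK : 0 < K)
    (A : Finset (Fin N)) (hA : A.card = K)
    (S : A → Finset A) (hS : ∀ k, (S k).Nonempty)
    (U : (A → A → ℝ) → ℝ) (hUconc : ConcaveOn ℝ Set.univ U) (hUcont : Continuous U)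
    (C C' : Fin N → Fin N → ℝ) (hC : ∀ i j, 0 ≤ C i j) (hC' : ∀ i j, 0 ≤ C' i j)
    (θ : ℝ) (hθ0 : 0 ≤ θ) (hθ1 : θ ≤ 1) :
    θ * mcfValue A S U C + (1 - θ) * mcfValue A S U C' ≤
      mcfValue A S U (fun i j => θ * C i j + (1 - θ) * C' i j) :=
  mcfValue_concave_general A S U hUconc hUcont C C' hC hC' θ hθ0 hθ1
end
end

section
/- (Slater point for P-MCF.) Assume C(i,j) > 0 for all i,j ∈ V and that for each k ∈ A the complement A \ S_k is nonempty (each commodity has at least one sink). Then there exists a pair (r, a) with 0 < r(i,j,k) < 1 and a(i,k) > 0 for all indices, satisfying the relay flow-conservation equality out_k(r,i) = 0 for every k ∈ A and i ∈ I, and satisfying all inequality constraints strictly: a(i,k) < out_k(r,i) for every k ∈ A and i ∈ S_k, and Σ_{k∈A} r(i,j,k) < C(i,j) for all i,j ∈ V. -/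
open Finset

noncomputable section

/-- (Slater point for P-MCF.) If all capacities are strictly positive and each
commodity has at least one sink, there is a strictly feasible point: `0 < r < 1`, `a > 0`,
flow conservation holds exactly at relays, and all inequality constraints hold strictly. -/
theorem mcf_slater_point {N K : ℕ} (hN : 0 < N) (hK : 0 < K)
    (A : Finset (Fin N)) (hA : A.card = K)
    (S : A → Finset A) (hS : ∀ k, (S k).Nonempty) (hsink : ∀ k, ∃ i : A, i ∉ S k)
    (C : Fin N → Fin N → ℝ) (hC : ∀ i j, 0 < C i j) :
    ∃ (r : Fin N → Fin N → A → ℝ) (a : A → A → ℝ),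
      (∀ i j k, 0 < r i j k ∧ r i j k < 1) ∧
      (∀ i k, 0 < a i k) ∧
      (∀ (k : A) (i : Fin N), i ∉ A → mcfOut A r k i = 0) ∧
      (∀ (k : A) (i : A), i ∈ S k → a i k < mcfOut A r k i) ∧
      (∀ i j, ∑ k, r i j k < C i j) := by
  classical
  choose t ht using hsink
  have hNE : Nonempty (Fin N × Fin N) := ⟨⟨⟨0, hN⟩, ⟨0, hN⟩⟩⟩
  obtain ⟨p, hp⟩ := Finite.exists_min (fun q : Fin N × Fin N => C q.1 q.2)
  set m : ℝ := min 1 (C p.1 p.2) with hm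
  have hm0 : 0 < m := lt_min one_pos (hC _ _)
  have hm1 : m ≤ 1 := min_le_left _ _
  have hmC : ∀ i j, m ≤ C i j := fun i j => le_trans (min_le_right _ _) (hp (i, j))
  set c : ℝ := m / (2 * (K + 1)) with hc
  have hK1 : (1 : ℝ) ≤ (K : ℝ) := by exact_mod_cast hK
  have hc0 : 0 < c := div_pos hm0 (by positivity)
  have hc2 : 2 * c < 1 := by
    rw [hc, ← mul_div_assoc, div_lt_one (by positivity)]
    nlinarith
  set r : Fin N → Fin N → A → ℝ := fun i j k =>
    c + (if (∃ h : i ∈ A, (⟨i, h⟩ : A) ∈ S k) ∧ j = ↑(t k) then c else 0) with hr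
  refine ⟨r, fun _ _ => c / 2, ?_, fun _ _ => by positivity, ?_, ?_, ?_⟩
  · intro i j k
    simp only [hr]
    split_ifs <;> constructor <;> linarith
  · intro k i hi
    have h1 : (∑ j, r i j k) = N * c := by
      have hfalse : ¬ ∃ h : i ∈ A, (⟨i, h⟩ : A) ∈ S k := fun ⟨h, _⟩ => hi h
      simp [hr, hfalse, Finset.sum_const, Finset.card_univ, nsmul_eq_mul]
    have h2 : (∑ j, r j i k) = N * c := by
      have hne : i ≠ ↑(t k) := by rintro rfl; exact hi (t k).2
      simp [hr, hne, Finset.sum_const, Finset.card_univ, nsmul_eq_mul]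
    simp [mcfOut, h1, h2]
  · intro k i hik
    have h1 : (∑ j, r ↑i j k) = N * c + c := by
      have hx : ∃ h : (i : Fin N) ∈ A, (⟨↑i, h⟩ : A) ∈ S k := ⟨i.2, hik⟩
      simp [hr, hx, hik, Finset.sum_add_distrib, Finset.sum_ite_eq', Finset.sum_const,
        Finset.card_univ, nsmul_eq_mul]
    have h2 : (∑ j, r j ↑i k) = N * c := by
      have hne : (i : Fin N) ≠ ↑(t k) := by
        intro h
        exact ht k (Subtype.coe_injective h ▸ hik)
      simp [hr, hne, Finset.sum_const, Finset.card_univ, nsmul_eq_mul]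
    have : mcfOut A r k ↑i = c := by simp [mcfOut, h1, h2]
    rw [this]; linarith
  · intro i j
    have hsum : ∑ k, r i j k ≤ (K : ℝ) * (2 * c) := by
      calc ∑ k, r i j k ≤ ∑ _k : A, 2 * c := by
            refine Finset.sum_le_sum fun k _ => ?_
            simp only [hr]; split_ifs <;> linarith
        _ = (K : ℝ) * (2 * c) := by
            rw [Finset.sum_const, Finset.card_univ, Fintype.card_coe, hA, nsmul_eq_mul]
    have hlt : (K : ℝ) * (2 * c) < m := by
      have heq : (K : ℝ) * (2 * c) = m * ((K : ℝ) / (K + 1)) := by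
        rw [hc]; field_simp
      rw [heq]
      have : (K : ℝ) / (K + 1) < 1 := by
        rw [div_lt_one (by positivity)]; linarith
      nlinarith
    exact lt_of_le_of_lt hsum (lt_of_lt_of_le hlt (hmC i j))
end
end

section
/- Assume C(i,j) > 0 for all i,j ∈ V, that for each k ∈ A the complement A \ S_k is nonempty, and that ω_k > 0 for all k ∈ A. Then the optimal value of the multi-commodity flow problem under the weighted-min utility is strictly positive: Φ_{U_ω}(C) > 0. -/
open Finset

noncomputable section

/-- If all capacities are strictly positive, each commodity has at least one sink,
and all weights are strictly positive, then the optimal value under the weighted-min utility is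
strictly positive. -/
theorem mcfValue_weightedMin_pos {N K : ℕ} (hN : 0 < N) (hK : 0 < K)
    (A : Finset (Fin N)) (hA : A.card = K)
    (S : A → Finset A) (hS : ∀ k, (S k).Nonempty) (hsink : ∀ k, ∃ i : A, i ∉ S k)
    (ω : A → ℝ) (hω : ∀ k, 0 < ω k)
    (C : Fin N → Fin N → ℝ) (hC : ∀ i j, 0 < C i j) :
    0 < mcfValue A S (fun a => ∑ k, ω k * (S k).inf' (hS k) (fun i => a i k)) C := by
  classical
  obtain ⟨t, ht⟩ := Classical.axiomOfChoice hsink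
  -- A is nonempty
  have hAne : A.Nonempty := Finset.card_pos.mp (hA ▸ hK)
  have hAfin : Nonempty A := ⟨⟨hAne.choose, hAne.choose_spec⟩⟩
  -- positive lower bound on capacities
  set i0 : Fin N := ⟨0, hN⟩ with hi0
  set m : ℝ := Finset.inf' (univ : Finset (Fin N × Fin N)) ⟨(i0, i0), mem_univ _⟩
      (fun p => C p.1 p.2) with hm
  have hmpos : 0 < m := by
    rw [hm]
    refine (Finset.lt_inf'_iff _).2 ?_
    intro p _
    exact hC p.1 p.2
  have hmle : ∀ i j, m ≤ C i j := by
    intro i j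
    exact Finset.inf'_le _ (mem_univ (i, j))
  -- choose epsilon
  set ε : ℝ := min 1 m / K with hε
  have hεpos : 0 < ε := by
    apply div_pos (lt_min one_pos hmpos)
    exact_mod_cast hK
  have hK1 : (1 : ℝ) ≤ (K : ℝ) := by exact_mod_cast hK
  have hεle1 : ε ≤ 1 := by
    calc ε ≤ min 1 m := by
          rw [hε]
          apply div_le_self (le_of_lt (lt_min one_pos hmpos)) hK1
      _ ≤ 1 := min_le_left _ _
  have hKε : (K : ℝ) * ε ≤ m := by
    rw [hε, mul_div_cancel₀]
    · exact min_le_right _ _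
    · positivity
  -- the flow
  set r : Fin N → Fin N → A → ℝ := fun i j k =>
    (if i ∈ (S k).image (fun x : A => (x : Fin N)) then ε else 0) *
    (if j = ((t k : A) : Fin N) then 1 else 0) with hr
  set a : A → A → ℝ := fun i k => if i ∈ S k then ε else 0 with ha
  have hrnn : ∀ i j k, 0 ≤ r i j k := by
    intro i j k
    simp only [hr]
    split <;> split <;> simp [le_of_lt hεpos]
  have hrle : ∀ i j k, r i j k ≤ ε := by
    intro i j k
    simp only [hr]
    split <;> split <;> simp [le_of_lt hεpos]
  have hr01 : ∀ i j k, 0 ≤ r i j k ∧ r i j k ≤ 1 :=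
    fun i j k => ⟨hrnn i j k, le_trans (hrle i j k) hεle1⟩
  -- sums
  have hsum1 : ∀ (i : Fin N) (k : A),
      (∑ j, r i j k) = if i ∈ (S k).image (fun x : A => (x : Fin N)) then ε else 0 := by
    intro i k
    rw [← Finset.mul_sum]
    simp [Finset.sum_ite_eq']
  have hsum2 : ∀ (i : Fin N) (k : A), i ≠ ((t k : A) : Fin N) → (∑ j, r j i k) = 0 := by
    intro i k hne
    apply Finset.sum_eq_zero
    intro j _
    simp [hr, hne]
  -- outflow at sources
  have hout_src : ∀ (k : A) (i : A), i ∈ S k → mcfOut A r k (i : Fin N) = ε := by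
    intro k i hi
    have hne : (i : Fin N) ≠ ((t k : A) : Fin N) := by
      intro h
      have : i = (t k : A) := Subtype.ext h
      exact ht k (this ▸ hi)
    have hmem : (i : Fin N) ∈ (S k).image (fun x : A => (x : Fin N)) :=
      Finset.mem_image.mpr ⟨i, hi, rfl⟩
    rw [mcfOut, hsum1, hsum2 _ _ hne, if_pos hmem, sub_zero]
  -- outflow at relays
  have hout_relay : ∀ (k : A) (i : Fin N), i ∉ A → mcfOut A r k i = 0 := by
    intro k i hi
    have hne : i ≠ ((t k : A) : Fin N) := by
      intro h
      exact hi (by rw [h]; exact (t k : A).2)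
    have hnmem : i ∉ (S k).image (fun x : A => (x : Fin N)) := by
      intro h
      obtain ⟨x, _, hx⟩ := Finset.mem_image.mp h
      exact hi (hx ▸ x.2)
    rw [mcfOut, hsum1, hsum2 _ _ hne, if_neg hnmem, sub_zero]
  -- feasibility
  have hfeas : (r, a) ∈ mcfFeas A S C := by
    refine ⟨hr01, ?_, ?_, hout_relay, ?_⟩
    · intro i k
      simp only [ha]
      split <;> simp [le_of_lt hεpos]
    · intro k i hi
      rw [hout_src k i hi]
      simp [ha, hi]
    · intro i j
      calc ∑ k : A, r i j k ≤ ∑ k : A, ε := by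
            apply Finset.sum_le_sum
            intro k _
            exact hrle i j k
        _ = (K : ℝ) * ε := by
            rw [Finset.sum_const, Finset.card_univ, Fintype.card_coe, hA, nsmul_eq_mul]
        _ ≤ m := hKε
        _ ≤ C i j := hmle i j
  -- value at (r, a)
  have hval : (∑ k : A, ω k * (S k).inf' (hS k) (fun i => a i k)) = ∑ k : A, ω k * ε := by
    apply Finset.sum_congr rfl
    intro k _
    congr 1
    have : (S k).inf' (hS k) (fun i => a i k) = (S k).inf' (hS k) (fun _ => ε) := by
      apply Finset.inf'_congr (hS k) rfl
      intro i hi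
      simp [ha, hi]
    rw [this, Finset.inf'_const]
  have hvalpos : 0 < ∑ k : A, ω k * ε := by
    apply Finset.sum_pos
    · intro k _
      exact mul_pos (hω k) hεpos
    · exact Finset.univ_nonempty
  -- bounded above
  have hbdd : BddAbove ((fun p => ∑ k : A, ω k * (S k).inf' (hS k) (fun i => p.2 i k)) ''
      mcfFeas A S C) := by
    refine ⟨∑ k : A, ω k * N, ?_⟩
    rintro x ⟨p, hp, rfl⟩
    obtain ⟨h01, hnn, hsrc, hrel, hcap⟩ := hp
    apply Finset.sum_le_sum
    intro k _
    apply mul_le_mul_of_nonneg_left _ (le_of_lt (hω k))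
    obtain ⟨i1, hi1⟩ := hS k
    calc (S k).inf' (hS k) (fun i => p.2 i k) ≤ p.2 i1 k := Finset.inf'_le _ hi1
      _ ≤ mcfOut A p.1 k i1 := hsrc k i1 hi1
      _ ≤ ∑ j, p.1 (i1 : Fin N) j k := by
          rw [mcfOut]
          have : (0:ℝ) ≤ ∑ j, p.1 j (i1 : Fin N) k :=
            Finset.sum_nonneg fun j _ => (h01 j _ k).1
          linarith
      _ ≤ ∑ _j : Fin N, (1 : ℝ) := Finset.sum_le_sum fun j _ => (h01 _ j k).2
      _ = (N : ℝ) := by simp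
  -- conclude
  have hle : (∑ k : A, ω k * ε) ≤ mcfValue A S
      (fun a => ∑ k, ω k * (S k).inf' (hS k) (fun i => a i k)) C := by
    rw [mcfValue]
    apply le_csSup hbdd
    exact ⟨(r, a), hfeas, hval⟩
  linarith
end
end

section
/- (Proposition 1, gradient formula.) Let c : ℝ² × ℝ² → ℝ be differentiable and symmetric (c(x,y) = c(y,x) for all x,y). For a configuration x = (x_1, …, x_N) ∈ (ℝ²)^N define the capacity matrix C(x)(i,j) := c(x_i, x_j). Let U be concave and continuous, let Φ := Φ_U be the value function of the multi-commodity flow problem, and fix x₀ with C(x₀)(i,j) > 0 for all i,j. Suppose Φ is Fréchet differentiable at C(x₀) and that μ* : V × V → ℝ with μ*(i,j) ≥ 0 is a supergradient of Φ at C(x₀): Φ(C') ≤ Φ(C(x₀)) + Σ_{i,j} μ*(i,j)·(C'(i,j) − C(x₀)(i,j)) for all capacity matrices C' with nonnegative entries. Then the composite map x ↦ Φ(C(x)) is differentiable at x₀ and, for each i ∈ V, its partial gradient with respect to x_i equals Σ_{j∈V} (μ*(i,j) + μ*(j,i)) · ∇_x c(x, y) evaluated at (x, y) = (x₀ᵢ,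 x₀ⱼ). -/
open Finset

open Filter Topology

local notation "E2" => EuclideanSpace ℝ (Fin 2)

lemma fderiv_eq_of_local_supergradient {X : Type*} [NormedAddCommGroup X] [NormedSpace ℝ X]
    {f : X → ℝ} {x : X} (hf : DifferentiableAt ℝ f x) (L : X →L[ℝ] ℝ)
    (h : ∀ᶠ y in 𝓝 x, f y ≤ f x + L (y - x)) : fderiv ℝ f x = L := by
  ext H
  set D := fderiv ℝ f x with hD
  have hψ : HasDerivAt (fun t : ℝ => x + t • H) H 0 := by
    simpa using ((hasDerivAt_id (0 : ℝ)).smul_const H).const_add x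
  have hfd : HasFDerivAt f D (x + (0:ℝ) • H) := by simpa using hf.hasFDerivAt
  have hg : HasDerivAt (fun t : ℝ => f (x + t • H)) (D H) 0 :=
    hfd.comp_hasDerivAt 0 hψ
  have hslope : Tendsto (slope (fun t : ℝ => f (x + t • H)) 0) (𝓝[≠] 0) (𝓝 (D H)) :=
    hasDerivAt_iff_tendsto_slope.1 hg
  have hev : ∀ᶠ t in 𝓝 (0 : ℝ), f (x + t • H) - f x ≤ t * L H := by
    have hcont : Tendsto (fun t : ℝ => x + t • H) (𝓝 0) (𝓝 x) := by
      simpa using hψ.continuousAt.tendsto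
    filter_upwards [hcont.eventually h] with t ht
    have : L (x + t • H - x) = t * L H := by
      rw [add_sub_cancel_left, map_smul, smul_eq_mul]
    linarith [ht, this.ge, this.le]
  have h1 : D H ≤ L H := by
    have hsl1 : Tendsto (slope (fun t : ℝ => f (x + t • H)) 0) (𝓝[>] (0:ℝ)) (𝓝 (D H)) :=
      hslope.mono_left (nhdsWithin_mono _ fun t ht => ne_of_gt ht)
    refine le_of_tendsto hsl1 ?_
    filter_upwards [hev.filter_mono nhdsWithin_le_nhds, self_mem_nhdsWithin] with t ht htpos
    have htpos : (0:ℝ) < t := htpos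
    rw [slope_def_field]
    simp only [sub_zero, zero_smul, add_zero]
    rw [div_le_iff₀ htpos]
    calc f (x + t • H) - f x ≤ t * L H := ht
      _ = L H * t := mul_comm _ _
  have h2 : L H ≤ D H := by
    have hsl2 : Tendsto (slope (fun t : ℝ => f (x + t • H)) 0) (𝓝[<] (0:ℝ)) (𝓝 (D H)) :=
      hslope.mono_left (nhdsWithin_mono _ fun t ht => ne_of_lt ht)
    refine ge_of_tendsto hsl2 ?_
    filter_upwards [hev.filter_mono nhdsWithin_le_nhds, self_mem_nhdsWithin] with t ht htneg
    have htneg : t < (0:ℝ) := htneg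
    rw [slope_def_field]
    simp only [sub_zero, zero_smul, add_zero]
    rw [le_div_iff_of_neg htneg]
    calc f (x + t • H) - f x ≤ t * L H := ht
      _ = L H * t := mul_comm _ _
  exact le_antisymm h1 h2


noncomputable section

/-- (Proposition 1, gradient formula.) If `Φ_U` is Fréchet differentiable at
`C(x₀)` and `μ* ≥ 0` is a supergradient of `Φ_U` at `C(x₀)`, then `x ↦ Φ_U(C(x))` is
differentiable at `x₀` and its partial gradient w.r.t. `x_i` is
`Σ_j (μ*(i,j) + μ*(j,i)) · ∇_x c(x₀ᵢ, x₀ⱼ)`. -/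
theorem mcf_gradient_formula {N K : ℕ} (hN : 0 < N) (hK : 0 < K)
    (A : Finset (Fin N)) (hA : A.card = K)
    (S : A → Finset A) (hS : ∀ k, (S k).Nonempty)
    (c : EuclideanSpace ℝ (Fin 2) → EuclideanSpace ℝ (Fin 2) → ℝ)
    (hcdiff : Differentiable ℝ (fun p : EuclideanSpace ℝ (Fin 2) × EuclideanSpace ℝ (Fin 2) =>
      c p.1 p.2))
    (hcsymm : ∀ x y, c x y = c y x)
    (U : (A → A → ℝ) → ℝ) (hUconc : ConcaveOn ℝ Set.univ U) (hUcont : Continuous U)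
    (x₀ : Fin N → EuclideanSpace ℝ (Fin 2))
    (hCpos : ∀ i j, 0 < c (x₀ i) (x₀ j))
    (hΦdiff : DifferentiableAt ℝ (mcfValue A S U) (fun i j => c (x₀ i) (x₀ j)))
    (μstar : Fin N → Fin N → ℝ) (hμ : ∀ i j, 0 ≤ μstar i j)
    (hsg : ∀ C' : Fin N → Fin N → ℝ, (∀ i j, 0 ≤ C' i j) →
      mcfValue A S U C' ≤ mcfValue A S U (fun i j => c (x₀ i) (x₀ j)) +
        ∑ i, ∑ j, μstar i j * (C' i j - c (x₀ i) (x₀ j))) :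
    DifferentiableAt ℝ
        (fun x : Fin N → EuclideanSpace ℝ (Fin 2) => mcfValue A S U (fun i j => c (x i) (x j)))
        x₀ ∧
      ∀ i : Fin N,
        gradient (fun z : EuclideanSpace ℝ (Fin 2) =>
            mcfValue A S U (fun i' j' =>
              c (Function.update x₀ i z i') (Function.update x₀ i z j'))) (x₀ i) =
          ∑ j, (μstar i j + μstar j i) • gradient (fun w => c w (x₀ j)) (x₀ i) := by
  classical
  set Φ : (Fin N → Fin N → ℝ) → ℝ := mcfValue A S U with hΦdef
  classical
  set C₀ : Fin N → Fin N → ℝ := fun i j => c (x₀ i) (x₀ j) with hC₀def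
  set L : (Fin N → Fin N → ℝ) →L[ℝ] ℝ :=
    ∑ i, ∑ j, μstar i j • ((ContinuousLinearMap.proj j).comp
      (ContinuousLinearMap.proj (R := ℝ) (φ := fun _ : Fin N => Fin N → ℝ) i)) with hLdef
  have hLapp : ∀ H : Fin N → Fin N → ℝ, L H = ∑ i, ∑ j, μstar i j * H i j := by
    intro H
    simp [hLdef, ContinuousLinearMap.sum_apply]
  have hloc : ∀ᶠ C' in 𝓝 C₀, Φ C' ≤ Φ C₀ + L (C' - C₀) := by
    have hpos : ∀ᶠ C' in 𝓝 C₀, ∀ i j, 0 ≤ C' i j := by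
      refine Filter.eventually_all.2 fun i => Filter.eventually_all.2 fun j => ?_
      have hT : Tendsto (fun C' : Fin N → Fin N → ℝ => C' i j) (𝓝 C₀) (𝓝 (C₀ i j)) :=
        ((continuous_apply j).comp (continuous_apply i)).tendsto C₀
      exact hT.eventually (eventually_ge_nhds (hCpos i j))
    filter_upwards [hpos] with C' h
    have h2 := hsg C' h
    rw [hLapp]
    exact h2
  have hDL : fderiv ℝ Φ C₀ = L := fderiv_eq_of_local_supergradient hΦdiff L hloc
  have hMfull : DifferentiableAt ℝ (fun x : Fin N → E2 => (fun i j => c (x i) (x j))) x₀ := by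
    rw [differentiableAt_pi]; intro i
    rw [differentiableAt_pi]; intro j
    exact (hcdiff (x₀ i, x₀ j)).comp (f := fun x : Fin N → E2 => (x i, x j)) x₀
      (((differentiable_apply i) x₀).prodMk ((differentiable_apply j) x₀))
  constructor
  · have := hΦdiff.comp x₀ hMfull; exact this
  · intro i
    set f₁ : Fin N → (E2 →L[ℝ] ℝ) := fun j => fderiv ℝ (fun w => c w (x₀ j)) (x₀ i) with hf₁def
    have hf₁d : ∀ j, DifferentiableAt ℝ (fun w : E2 => c w (x₀ j)) (x₀ i) := fun j =>
      (hcdiff (x₀ i, x₀ j)).comp (f := fun w : E2 => (w, x₀ j)) (x₀ i) (differentiableAt_id.prodMk (differentiableAt_const _))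
    set e : Fin N → Fin N → (E2 →L[ℝ] ℝ) := fun i' j' =>
      (if i' = i then f₁ j' else 0) + (if j' = i then f₁ i' else 0) with hedef
    have hent : ∀ i' j', HasFDerivAt
        (fun z : E2 => c (Function.update x₀ i z i') (Function.update x₀ i z j'))
        (e i' j') (x₀ i) := by
      intro i' j'
      rcases eq_or_ne i' i with hi' | hi' <;> rcases eq_or_ne j' i with hj' | hj'
      · -- both equal i : z ↦ c z z
        rw [hi', hj']
        have hfe : (fun z : E2 => c (Function.update x₀ i z i) (Function.update x₀ i z i))
            = fun z : E2 => c z z := by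
          funext z; rw [Function.update_self]
        rw [hfe]
        simp only [hedef, if_pos rfl]
        set Dc := fderiv ℝ (fun p : E2 × E2 => c p.1 p.2) (x₀ i, x₀ i) with hDc
        have hDcH : HasFDerivAt (fun p : E2 × E2 => c p.1 p.2) Dc (x₀ i, x₀ i) :=
          (hcdiff _).hasFDerivAt
        have hdd : HasFDerivAt (fun z : E2 => ((z, z) : E2 × E2))
            ((ContinuousLinearMap.id ℝ E2).prod (ContinuousLinearMap.id ℝ E2)) (x₀ i) :=
          (hasFDerivAt_id _).prodMk (hasFDerivAt_id _)
        have hdiag' := HasFDerivAt.comp (f := fun z : E2 => ((z, z) : E2 × E2)) (x₀ i) hDcH hdd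
        have hdiag : HasFDerivAt (fun z : E2 => c z z)
            (Dc.comp ((ContinuousLinearMap.id ℝ E2).prod (ContinuousLinearMap.id ℝ E2))) (x₀ i) :=
          hdiag'
        have hleft' := HasFDerivAt.comp (f := fun z : E2 => ((z, x₀ i) : E2 × E2)) (x₀ i) hDcH (hasFDerivAt_prodMk_left (x₀ i) (x₀ i))
        have hleft : HasFDerivAt (fun w : E2 => c w (x₀ i))
            (Dc.comp (ContinuousLinearMap.inl ℝ E2 E2)) (x₀ i) := hleft'
        have hright' := HasFDerivAt.comp (f := fun z : E2 => ((x₀ i, z) : E2 × E2)) (x₀ i) hDcH (hasFDerivAt_prodMk_right (x₀ i) (x₀ i))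
        have hright : HasFDerivAt (fun w : E2 => c (x₀ i) w)
            (Dc.comp (ContinuousLinearMap.inr ℝ E2 E2)) (x₀ i) := hright'
        have hswap : (fun w : E2 => c (x₀ i) w) = (fun w : E2 => c w (x₀ i)) :=
          funext fun w => hcsymm _ _
        rw [hswap] at hright
        have h1 : Dc.comp (ContinuousLinearMap.inl ℝ E2 E2) = f₁ i := hleft.fderiv.symm
        have h2 : Dc.comp (ContinuousLinearMap.inr ℝ E2 E2) = f₁ i := hright.fderiv.symm
        have hkey : Dc.comp ((ContinuousLinearMap.id ℝ E2).prod (ContinuousLinearMap.id ℝ E2))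
            = f₁ i + f₁ i := by
          ext w
          have hw : ((w, w) : E2 × E2) = (w, 0) + (0, w) := by simp
          simp only [ContinuousLinearMap.comp_apply, ContinuousLinearMap.prod_apply,
            ContinuousLinearMap.id_apply, ContinuousLinearMap.add_apply]
          calc Dc (w, w) = Dc ((w, 0) + (0, w)) := by rw [← hw]
            _ = Dc (w, 0) + Dc (0, w) := map_add _ _ _
            _ = (Dc.comp (ContinuousLinearMap.inl ℝ E2 E2)) w
                + (Dc.comp (ContinuousLinearMap.inr ℝ E2 E2)) w := by
                  simp [ContinuousLinearMap.comp_apply]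
            _ = f₁ i w + f₁ i w := by rw [h1, h2]
        rw [hkey] at hdiag
        exact hdiag
      · rw [hi']
        have hfe : (fun z : E2 => c (Function.update x₀ i z i) (Function.update x₀ i z j'))
            = fun z : E2 => c z (x₀ j') := by
          funext z; rw [Function.update_self, Function.update_of_ne hj']
        rw [hfe]
        simp only [hedef, if_pos rfl, if_neg hj', add_zero]
        exact (hf₁d j').hasFDerivAt
      · rw [hj']
        have hfe : (fun z : E2 => c (Function.update x₀ i z i') (Function.update x₀ i z i))
            = fun z : E2 => c z (x₀ i') := by
          funext z; rw [Function.update_of_ne hi', Function.update_self]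
          exact hcsymm _ _
        rw [hfe]
        simp only [hedef, if_neg hi', if_pos rfl, zero_add]
        exact (hf₁d i').hasFDerivAt
      · have hfe : (fun z : E2 => c (Function.update x₀ i z i') (Function.update x₀ i z j'))
            = fun _ : E2 => c (x₀ i') (x₀ j') := by
          funext z; rw [Function.update_of_ne hi', Function.update_of_ne hj']
        rw [hfe]
        simp only [hedef, if_neg hi', if_neg hj', add_zero]
        exact hasFDerivAt_const _ _
    set DM : E2 →L[ℝ] (Fin N → Fin N → ℝ) :=
      ContinuousLinearMap.pi (fun i' => ContinuousLinearMap.pi (fun j' => e i' j')) with hDMdef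
    have hM : HasFDerivAt (fun z : E2 => fun i' j' =>
        c (Function.update x₀ i z i') (Function.update x₀ i z j')) DM (x₀ i) := by
      rw [hDMdef]
      exact hasFDerivAt_pi.2 fun i' => hasFDerivAt_pi.2 fun j' => hent i' j'
    have hMpt : (fun i' j' => c (Function.update x₀ i (x₀ i) i') (Function.update x₀ i (x₀ i) j'))
        = C₀ := by
      rw [Function.update_eq_self]
    have hΦH : HasFDerivAt Φ L (fun i' j' =>
        c (Function.update x₀ i (x₀ i) i') (Function.update x₀ i (x₀ i) j')) := by
      rw [hMpt]
      exact hDL ▸ hΦdiff.hasFDerivAt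
    have hg : HasFDerivAt (fun z : E2 => Φ (fun i' j' =>
        c (Function.update x₀ i z i') (Function.update x₀ i z j'))) (L.comp DM) (x₀ i) :=
      hΦH.comp (g := Φ) (x₀ i) hM
    have hT : L.comp DM = ∑ j, (μstar i j + μstar j i) • f₁ j := by
      ext w
      rw [ContinuousLinearMap.comp_apply, hLapp]
      have hDMw : ∀ i' j', DM w i' j' = e i' j' w := fun i' j' => rfl
      simp only [hDMw, hedef, ContinuousLinearMap.add_apply]
      simp only [apply_ite (fun (T : E2 →L[ℝ] ℝ) => T w), ContinuousLinearMap.zero_apply]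
      have hsplit : ∀ i' j',
          μstar i' j' * ((if i' = i then f₁ j' w else 0) + (if j' = i then f₁ i' w else 0))
          = (if i' = i then μstar i' j' * f₁ j' w else 0)
            + (if j' = i then μstar i' j' * f₁ i' w else 0) := by
        intro i' j'
        rcases eq_or_ne i' i with h | h <;> rcases eq_or_ne j' i with h2 | h2 <;>
          simp [h, h2, mul_add]
      simp only [hsplit, Finset.sum_add_distrib]
      rw [Finset.sum_comm]
      simp only [Finset.sum_ite_eq', Finset.mem_univ, if_true,
        ContinuousLinearMap.sum_apply, ContinuousLinearMap.smul_apply, smul_eq_mul]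
      rw [← Finset.sum_add_distrib]
      exact Finset.sum_congr rfl fun j _ => by ring
    rw [hT] at hg
    refine (hasGradientAt_iff_hasFDerivAt.2 ?_).gradient
    have htd : (InnerProductSpace.toDual ℝ E2)
        (∑ j, (μstar i j + μstar j i) • gradient (fun w => c w (x₀ j)) (x₀ i))
        = ∑ j, (μstar i j + μstar j i) • f₁ j := by
      rw [map_sum]
      refine Finset.sum_congr rfl fun j _ => ?_
      rw [map_smulₛₗ]
      have hgj : gradient (fun w => c w (x₀ j)) (x₀ i) =
          (InnerProductSpace.toDual ℝ E2).symm (f₁ j) := rfl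
      rw [hgj, LinearIsometryEquiv.apply_symm_apply]
      simp
    rw [htd]
    exact hg
end
end

section
/- (Proposition 1, direction of local increase.) Under the hypotheses of the gradient formula — c : ℝ² × ℝ² → ℝ differentiable and symmetric, C(x)(i,j) := c(x_i, x_j), U concave and continuous, Φ := Φ_U Fréchet differentiable at C(x₀) where C(x₀) has strictly positive entries, and μ* ≥ 0 a supergradient of Φ at C(x₀) — define the direction d ∈ (ℝ²)^N by dᵢ := Σ_{j∈V} (μ*(i,j) + μ*(j,i)) · ∇_x c(x,y)|_{(x,y)=(x₀ᵢ,x₀ⱼ)}. Then the derivative at t = 0 of the map t ↦ Φ(C(x₀ + t·d)) equals Σ_{i∈V} ‖dᵢ‖², and if d ≠ 0 there exists t̄ > 0 such that Φ(C(x₀ + t·d)) > Φ(C(x₀)) for all t ∈ (0, t̄); that is, d is a direction of local increase for the team objective. -/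
open Finset

noncomputable section

open Filter Topology RealInnerProductSpace in
/-- If `Φ` is differentiable at `C₀` (entrywise positive) and `μ` is a supergradient on the
nonnegative orthant, then the Fréchet derivative pairs with `μ`. -/
lemma aux_fderiv_eq_supergradient {n m : Type*} [Fintype n] [Fintype m]
    {Φ : (n → m → ℝ) → ℝ} {C₀ : n → m → ℝ} {μ : n → m → ℝ}
    (hΦ : DifferentiableAt ℝ Φ C₀) (hpos : ∀ i j, 0 < C₀ i j)
    (hsg : ∀ C', (∀ i j, 0 ≤ C' i j) →
      Φ C' ≤ Φ C₀ + ∑ i, ∑ j, μ i j * (C' i j - C₀ i j))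
    (H : n → m → ℝ) :
    fderiv ℝ Φ C₀ H = ∑ i, ∑ j, μ i j * H i j := by
  set s := ∑ i, ∑ j, μ i j * H i j with hs
  set φ : ℝ → ℝ := fun t => Φ (C₀ + t • H) with hφdef
  have hline : HasDerivAt (fun t : ℝ => C₀ + t • H) H 0 := by
    simpa using ((hasDerivAt_id (0 : ℝ)).smul_const H).const_add C₀
  have hΦ' : HasFDerivAt Φ (fderiv ℝ Φ C₀) (C₀ + (0 : ℝ) • H) := by
    simpa using hΦ.hasFDerivAt
  have hφ : HasDerivAt φ (fderiv ℝ Φ C₀ H) 0 := hΦ'.comp_hasDerivAt 0 hline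
  have hφ0 : φ 0 = Φ C₀ := by simp [hφdef]
  have hev : ∀ᶠ t in 𝓝 (0 : ℝ), ∀ i j, 0 ≤ C₀ i j + t * H i j := by
    refine eventually_all.2 fun i => eventually_all.2 fun j => ?_
    have hc : ContinuousAt (fun t : ℝ => C₀ i j + t * H i j) 0 := by fun_prop
    have h0 : (0 : ℝ) < C₀ i j + 0 * H i j := by simpa using hpos i j
    exact (hc.eventually (eventually_gt_nhds h0)).mono fun t ht => ht.le
  have hub : ∀ᶠ t in 𝓝 (0 : ℝ), φ t - φ 0 ≤ t * s := by
    filter_upwards [hev] with t ht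
    have hCeq : (C₀ + t • H) = fun i j => C₀ i j + t * H i j := by
      funext i j; simp
    have h1 := hsg (fun i j => C₀ i j + t * H i j) ht
    have h2 : ∑ i, ∑ j, μ i j * ((C₀ i j + t * H i j) - C₀ i j) = t * s := by
      rw [hs, Finset.mul_sum]
      refine Finset.sum_congr rfl fun i _ => ?_
      rw [Finset.mul_sum]
      exact Finset.sum_congr rfl fun j _ => by ring
    rw [hφ0]
    show Φ (C₀ + t • H) - Φ C₀ ≤ t * s
    rw [hCeq]
    linarith [h1, h2.le, h2.ge]
  have hslope := hasDerivAt_iff_tendsto_slope.1 hφ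
  have hmono₁ : 𝓝[>] (0:ℝ) ≤ 𝓝[≠] (0:ℝ) :=
    nhdsWithin_mono _ fun t ht => ne_of_gt ht
  have hmono₂ : 𝓝[<] (0:ℝ) ≤ 𝓝[≠] (0:ℝ) :=
    nhdsWithin_mono _ fun t ht => ne_of_lt ht
  have hle : fderiv ℝ Φ C₀ H ≤ s := by
    refine le_of_tendsto (hslope.mono_left hmono₁) ?_
    · filter_upwards [eventually_nhdsWithin_of_eventually_nhds hub,
        self_mem_nhdsWithin] with t ht ht0
      have ht0' : (0 : ℝ) < t := ht0
      rw [slope_def_field]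
      rw [div_le_iff₀ (by simpa using ht0')]
      simpa [mul_comm] using ht
  have hge : s ≤ fderiv ℝ Φ C₀ H := by
    refine ge_of_tendsto (hslope.mono_left hmono₂) ?_
    · filter_upwards [eventually_nhdsWithin_of_eventually_nhds hub,
        self_mem_nhdsWithin] with t ht ht0
      have ht0' : t < 0 := ht0
      rw [slope_def_field]
      rw [le_div_iff_of_neg (by simpa using ht0')]
      simpa [mul_comm] using ht
  linarith

open Filter Topology RealInnerProductSpace in
/-- Derivative of `t ↦ c (x + t • u) (y + t • v)` at `0` in terms of the partial gradients,
for a symmetric differentiable `c`. -/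
lemma aux_hasDerivAt_curve {E : Type*} [NormedAddCommGroup E] [InnerProductSpace ℝ E]
    [CompleteSpace E] {c : E → E → ℝ}
    (hcdiff : Differentiable ℝ (fun p : E × E => c p.1 p.2))
    (hcsymm : ∀ x y, c x y = c y x) (x y u v : E) :
    HasDerivAt (fun t : ℝ => c (x + t • u) (y + t • v))
      (⟪gradient (fun w => c w y) x, u⟫ + ⟪gradient (fun w => c w x) y, v⟫) 0 := by
  set L := fderiv ℝ (fun p : E × E => c p.1 p.2) (x, y) with hL
  have hcL : HasFDerivAt (fun p : E × E => c p.1 p.2) L (x, y) := (hcdiff (x, y)).hasFDerivAt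
  have h1 : HasDerivAt (fun t : ℝ => x + t • u) u 0 := by
    simpa using ((hasDerivAt_id (0 : ℝ)).smul_const u).const_add x
  have h2 : HasDerivAt (fun t : ℝ => y + t • v) v 0 := by
    simpa using ((hasDerivAt_id (0 : ℝ)).smul_const v).const_add y
  have hline : HasDerivAt (fun t : ℝ => (x + t • u, y + t • v)) (u, v) 0 := h1.prodMk h2
  have hcL' : HasFDerivAt (fun p : E × E => c p.1 p.2) L (x + (0 : ℝ) • u, y + (0 : ℝ) • v) := by
    simpa using hcL
  have hmain : HasDerivAt (fun t : ℝ => c (x + t • u) (y + t • v)) (L (u, v)) 0 :=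
    by have := hcL'.comp_hasDerivAt 0 hline; exact this
  have hx : HasFDerivAt (fun w => c w y) (L.comp (ContinuousLinearMap.inl ℝ E E)) x :=
    by have := hcL.comp x (hasFDerivAt_prodMk_left (𝕜 := ℝ) x y); exact this
  have hgx : (InnerProductSpace.toDual ℝ E) (gradient (fun w => c w y) x)
      = L.comp (ContinuousLinearMap.inl ℝ E E) :=
    (hx.differentiableAt.hasGradientAt.hasFDerivAt).unique hx
  have hyeq : (fun w => c x w) = (fun w => c w x) := funext fun w => hcsymm x w
  have hy : HasFDerivAt (fun w => c w x) (L.comp (ContinuousLinearMap.inr ℝ E E)) y := by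
    rw [← hyeq]
    have := hcL.comp y (hasFDerivAt_prodMk_right (𝕜 := ℝ) x y); exact this
  have hgy : (InnerProductSpace.toDual ℝ E) (gradient (fun w => c w x) y)
      = L.comp (ContinuousLinearMap.inr ℝ E E) :=
    (hy.differentiableAt.hasGradientAt.hasFDerivAt).unique hy
  have hsplit : L (u, v) = ⟪gradient (fun w => c w y) x, u⟫ + ⟪gradient (fun w => c w x) y, v⟫ := by
    have h1' : ⟪gradient (fun w => c w y) x, u⟫ = L (u, 0) := by
      rw [← InnerProductSpace.toDual_apply_apply, hgx]; rfl
    have h2' : ⟪gradient (fun w => c w x) y, v⟫ = L (0, v) := by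
      rw [← InnerProductSpace.toDual_apply_apply, hgy]; rfl
    have : ((u, v) : E × E) = (u, 0) + (0, v) := by simp
    rw [h1', h2', this, map_add]
  rw [← hsplit]
  exact hmain

open Filter Topology RealInnerProductSpace

/-- (Proposition 1, direction of local increase.) With
`dᵢ = Σ_j (μ*(i,j) + μ*(j,i)) · ∇_x c(x₀ᵢ, x₀ⱼ)`, the map `t ↦ Φ_U(C(x₀ + t·d))` has derivative
`Σ_i ‖dᵢ‖²` at `t = 0`, and if `d ≠ 0` then `Φ_U(C(x₀ + t·d)) > Φ_U(C(x₀))` for all small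
`t > 0`: `d` is a direction of local increase for the team objective. -/
theorem mcf_direction_of_local_increase {N K : ℕ} (hN : 0 < N) (hK : 0 < K)
    (A : Finset (Fin N)) (hA : A.card = K)
    (S : A → Finset A) (hS : ∀ k, (S k).Nonempty)
    (c : EuclideanSpace ℝ (Fin 2) → EuclideanSpace ℝ (Fin 2) → ℝ)
    (hcdiff : Differentiable ℝ (fun p : EuclideanSpace ℝ (Fin 2) × EuclideanSpace ℝ (Fin 2) =>
      c p.1 p.2))
    (hcsymm : ∀ x y, c x y = c y x)
    (U : (A → A → ℝ) → ℝ) (hUconc : ConcaveOn ℝ Set.univ U) (hUcont : Continuous U)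
    (x₀ : Fin N → EuclideanSpace ℝ (Fin 2))
    (hCpos : ∀ i j, 0 < c (x₀ i) (x₀ j))
    (hΦdiff : DifferentiableAt ℝ (mcfValue A S U) (fun i j => c (x₀ i) (x₀ j)))
    (μstar : Fin N → Fin N → ℝ) (hμ : ∀ i j, 0 ≤ μstar i j)
    (hsg : ∀ C' : Fin N → Fin N → ℝ, (∀ i j, 0 ≤ C' i j) →
      mcfValue A S U C' ≤ mcfValue A S U (fun i j => c (x₀ i) (x₀ j)) +
        ∑ i, ∑ j, μstar i j * (C' i j - c (x₀ i) (x₀ j)))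
    (d : Fin N → EuclideanSpace ℝ (Fin 2))
    (hd : ∀ i, d i = ∑ j, (μstar i j + μstar j i) • gradient (fun w => c w (x₀ j)) (x₀ i)) :
    HasDerivAt
        (fun t : ℝ => mcfValue A S U (fun i j => c (x₀ i + t • d i) (x₀ j + t • d j)))
        (∑ i, ‖d i‖ ^ 2) 0 ∧
      (d ≠ 0 → ∃ tbar > (0 : ℝ), ∀ t ∈ Set.Ioo (0 : ℝ) tbar,
        mcfValue A S U (fun i j => c (x₀ i) (x₀ j)) <
          mcfValue A S U (fun i j => c (x₀ i + t • d i) (x₀ j + t • d j))) := by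
  classical
  have hF0 : (fun i j => c (x₀ i + (0:ℝ) • d i) (x₀ j + (0:ℝ) • d j))
      = (fun i j => c (x₀ i) (x₀ j)) := by
    funext i j; simp
  set g : Fin N → Fin N → EuclideanSpace ℝ (Fin 2) :=
    fun i j => gradient (fun w => c w (x₀ j)) (x₀ i) with hg
  set H : Fin N → Fin N → ℝ := fun i j => ⟪g i j, d i⟫ + ⟪g j i, d j⟫ with hH
  have hγ : HasDerivAt (fun t : ℝ => fun i j => c (x₀ i + t • d i) (x₀ j + t • d j)) H 0 :=
    hasDerivAt_pi.2 fun i => hasDerivAt_pi.2 fun j =>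
      aux_hasDerivAt_curve hcdiff hcsymm (x₀ i) (x₀ j) (d i) (d j)
  have hΦ' : HasFDerivAt (mcfValue A S U)
      (fderiv ℝ (mcfValue A S U) (fun i j => c (x₀ i) (x₀ j)))
      (fun i j => c (x₀ i + (0:ℝ) • d i) (x₀ j + (0:ℝ) • d j)) := by
    rw [hF0]; exact hΦdiff.hasFDerivAt
  have hFder : HasDerivAt
      (fun t : ℝ => mcfValue A S U (fun i j => c (x₀ i + t • d i) (x₀ j + t • d j)))
      (fderiv ℝ (mcfValue A S U) (fun i j => c (x₀ i) (x₀ j)) H) 0 := by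
    simpa [Function.comp_def] using hΦ'.comp_hasDerivAt 0 hγ
  have hkey := aux_fderiv_eq_supergradient hΦdiff hCpos hsg H
  have hinner : ∀ i (u : EuclideanSpace ℝ (Fin 2)),
      ⟪d i, u⟫ = ∑ j, (μstar i j + μstar j i) * ⟪g i j, u⟫ := by
    intro i u
    rw [hd i, sum_inner]
    exact Finset.sum_congr rfl fun j _ => real_inner_smul_left _ _ _
  have hsum : ∑ i, ∑ j, μstar i j * H i j = ∑ i, ‖d i‖ ^ 2 := by
    have hswap : ∑ i, ∑ j, μstar i j * ⟪g j i, d j⟫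
        = ∑ i, ∑ j, μstar j i * ⟪g i j, d i⟫ := Finset.sum_comm
    calc ∑ i, ∑ j, μstar i j * H i j
        = (∑ i, ∑ j, μstar i j * ⟪g i j, d i⟫)
            + ∑ i, ∑ j, μstar i j * ⟪g j i, d j⟫ := by
          simp only [hH, mul_add, Finset.sum_add_distrib]
      _ = ∑ i, ∑ j, (μstar i j + μstar j i) * ⟪g i j, d i⟫ := by
          rw [hswap, ← Finset.sum_add_distrib]
          refine Finset.sum_congr rfl fun i _ => ?_
          rw [← Finset.sum_add_distrib]
          exact Finset.sum_congr rfl fun j _ => by ring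
      _ = ∑ i, ⟪d i, d i⟫ := Finset.sum_congr rfl fun i _ => (hinner i (d i)).symm
      _ = ∑ i, ‖d i‖ ^ 2 := Finset.sum_congr rfl fun i _ => real_inner_self_eq_norm_sq _
  rw [hkey, hsum] at hFder
  refine ⟨hFder, fun hdne => ?_⟩
  have hpos : 0 < ∑ i, ‖d i‖ ^ 2 := by
    obtain ⟨i, hi⟩ : ∃ i, d i ≠ 0 := by
      by_contra h; push_neg at h; exact hdne (funext h)
    exact Finset.sum_pos' (fun j _ => by positivity)
      ⟨i, Finset.mem_univ i, pow_pos (norm_pos_iff.2 hi) 2⟩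
  have hmono : 𝓝[>] (0:ℝ) ≤ 𝓝[≠] (0:ℝ) := nhdsWithin_mono _ fun t ht => ne_of_gt ht
  have hslope := (hasDerivAt_iff_tendsto_slope.1 hFder).mono_left hmono
  have hev : ∀ᶠ t in 𝓝[>] (0:ℝ),
      mcfValue A S U (fun i j => c (x₀ i) (x₀ j)) <
        mcfValue A S U (fun i j => c (x₀ i + t • d i) (x₀ j + t • d j)) := by
    filter_upwards [hslope.eventually (eventually_gt_nhds hpos), self_mem_nhdsWithin]
      with t h1 h2
    have h2' : (0:ℝ) < t := h2
    rw [slope_def_field] at h1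
    set F0 := mcfValue A S U (fun i j => c (x₀ i + (0:ℝ) • d i) (x₀ j + (0:ℝ) • d j)) with hF0'
    set Ft := mcfValue A S U (fun i j => c (x₀ i + t • d i) (x₀ j + t • d j)) with hFt'
    have h1' : 0 < (Ft - F0) / (t - 0) := h1
    have h4 : 0 < Ft - F0 := by
      have := (div_pos_iff.1 (by simpa using h1'))
      rcases this with ⟨h, _⟩ | ⟨_, h⟩
      · exact h
      · linarith
    have h5 : F0 = mcfValue A S U (fun i j => c (x₀ i) (x₀ j)) := by
      rw [hF0', hF0]
    linarith
  obtain ⟨u, hu, hsub⟩ := mem_nhdsGT_iff_exists_Ioo_subset.1 hev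
  exact ⟨u, hu, fun t ht => hsub ht⟩
end
end
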